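/- arXiv:2210.14893 — 5 statements merged into one kernel-verified Lean document; each statement's English description precedes it below -/
import Mathlib

section
/- Fix positive integers T, n_a, n_b, reals ε_u ≥ 0, ε_y ≥ 0, vectors a ∈ ℝ^{n_a}, b ∈ ℝ^{n_b}, h ∈ ℝ^T, and a real number q. Suppose there exist functions ψ⁺, ψ⁻ : {−n_b+1,…,T−1} → [0,∞), ζ⁺, ζ⁻ : {−n_a+1,…,T} → [0,∞), and μ ∈ ℝ^T (extended by μ_t = 0 for t ∉ {1,…,T}) such that: (i) ψ⁺_s − ψ⁻_s = Σ_{i=1}^{n_b} b_i μ_{s+i} for all s ∈ {−n_b+1,…,T−1}; (ii) ζ⁺_s − ζ⁻_s = −( μ_s + Σ_{i=1}^{n_a} a_i μ_{s+i} ) for all s ∈ {−n_a+1,…,T}; and (iii) Q := −q + Σ_{t=1}^T h_t μ_t + ε_u Σ_{s=−n_b+1}^{T−1} (ψ⁺_s + ψ⁻_s) + ε_y Σ_{s=−n_a+1}^{T} (ζ⁺_s + ζ⁻_s) < 0. Then there is no feasible noise pair (Δu, Δy) together with q ≤ 0; equivalently, if some feasible noise pair exists, then q > 0. (Sufficiency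 direction of Theorem 3: the dual certificate invalidates the existence statement.) -/
private lemma shift_sum_aux (T : ℕ) (μ : ℤ → ℝ)
    (hμ0 : ∀ t : ℤ, t ∉ Finset.Icc (1:ℤ) (T:ℤ) → μ t = 0)
    (c lo hi : ℤ) (hlo : lo ≤ 1 - c) (hhi : (T:ℤ) - c ≤ hi) (f : ℤ → ℝ) :
    ∑ t ∈ Finset.Icc (1:ℤ) (T:ℤ), μ t * f (t - c)
      = ∑ s ∈ Finset.Icc lo hi, μ (s + c) * f s := by
  have h1 : ∑ s ∈ Finset.Icc lo hi, μ (s + c) * f s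
      = ∑ s ∈ Finset.Icc (1 - c) ((T:ℤ) - c), μ (s + c) * f s := by
    refine (Finset.sum_subset ?_ ?_).symm
    · intro x hx; simp only [Finset.mem_Icc] at *; omega
    · intro x hx hx'
      have : μ (x + c) = 0 := by
        apply hμ0; simp only [Finset.mem_Icc] at *; omega
      simp [this]
  rw [h1]
  rw [show Finset.Icc (1:ℤ) (T:ℤ)
      = (Finset.Icc (1 - c) ((T:ℤ) - c)).map (addRightEmbedding c) by
    rw [Finset.map_add_right_Icc]; congr 1 <;> ring]
  rw [Finset.sum_map]
  simp [addRightEmbedding]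

private lemma bound_aux (x e p m : ℝ) (hx : |x| ≤ e) (hp : 0 ≤ p) (hm : 0 ≤ m) :
    -(e * (p + m)) ≤ x * -(p - m) := by
  have h1 := abs_le.mp hx
  nlinarith [h1.1, h1.2]

/-- Sufficiency direction of Theorem 3.  Given the dual certificate
`(ψ⁺, ψ⁻, ζ⁺, ζ⁻, μ)` satisfying the matching conditions and `Q < 0`, no feasible
noise pair `(Δu, Δy)` can coexist with `q ≤ 0`; equivalently, if some feasible
noise pair exists then `q > 0`.  Vectors `a ∈ ℝ^{n_a}`, `b ∈ ℝ^{n_b}` are indexed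
so that `a i` stands for `a_{i+1}`; `μ` is extended by zero outside `{1,…,T}`. -/
theorem alternatives_sufficiency
    (T na nb : ℕ) (hT : 0 < T) (hna : 0 < na) (hnb : 0 < nb)
    (εu εy : ℝ) (hεu : 0 ≤ εu) (hεy : 0 ≤ εy)
    (a : Fin na → ℝ) (b : Fin nb → ℝ) (h : ℤ → ℝ) (q : ℝ)
    (ψp ψm ζp ζm μ : ℤ → ℝ)
    (hψp : ∀ s ∈ Finset.Icc (-(nb : ℤ) + 1) ((T : ℤ) - 1), 0 ≤ ψp s)
    (hψm : ∀ s ∈ Finset.Icc (-(nb : ℤ) + 1) ((T : ℤ) - 1), 0 ≤ ψm s)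
    (hζp : ∀ s ∈ Finset.Icc (-(na : ℤ) + 1) (T : ℤ), 0 ≤ ζp s)
    (hζm : ∀ s ∈ Finset.Icc (-(na : ℤ) + 1) (T : ℤ), 0 ≤ ζm s)
    (hμ0 : ∀ t : ℤ, t ∉ Finset.Icc (1 : ℤ) (T : ℤ) → μ t = 0)
    (hmatchu : ∀ s ∈ Finset.Icc (-(nb : ℤ) + 1) ((T : ℤ) - 1),
      ψp s - ψm s = ∑ i : Fin nb, b i * μ (s + (i.val + 1 : ℤ)))
    (hmatchy : ∀ s ∈ Finset.Icc (-(na : ℤ) + 1) (T : ℤ),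
      ζp s - ζm s = -(μ s + ∑ i : Fin na, a i * μ (s + (i.val + 1 : ℤ))))
    (hQ : -q + (∑ t ∈ Finset.Icc (1 : ℤ) (T : ℤ), h t * μ t)
        + εu * (∑ s ∈ Finset.Icc (-(nb : ℤ) + 1) ((T : ℤ) - 1), (ψp s + ψm s))
        + εy * (∑ s ∈ Finset.Icc (-(na : ℤ) + 1) (T : ℤ), (ζp s + ζm s)) < 0) :
    ∀ Δu Δy : ℤ → ℝ,
      (∀ s ∈ Finset.Icc (-(nb : ℤ) + 1) ((T : ℤ) - 1), |Δu s| ≤ εu) →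
      (∀ s ∈ Finset.Icc (-(na : ℤ) + 1) (T : ℤ), |Δy s| ≤ εy) →
      (∀ t ∈ Finset.Icc (1 : ℤ) (T : ℤ),
        h t - (∑ i : Fin na, a i * Δy (t - (i.val + 1 : ℤ)))
            + (∑ i : Fin nb, b i * Δu (t - (i.val + 1 : ℤ))) - Δy t = 0) →
      0 < q := by
  intro Δu Δy hu hy hres
  -- abbreviations
  have key : ∑ t ∈ Finset.Icc (1:ℤ) (T:ℤ), h t * μ t
      = (∑ s ∈ Finset.Icc (-(na : ℤ) + 1) (T : ℤ),
          Δy s * (μ s + ∑ i : Fin na, a i * μ (s + (i.val + 1 : ℤ))))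
        - ∑ s ∈ Finset.Icc (-(nb : ℤ) + 1) ((T : ℤ) - 1),
          Δu s * (∑ i : Fin nb, b i * μ (s + (i.val + 1 : ℤ))) := by
    have step1 : ∑ t ∈ Finset.Icc (1:ℤ) (T:ℤ), h t * μ t
        = ∑ t ∈ Finset.Icc (1:ℤ) (T:ℤ),
            (∑ i : Fin na, a i * (μ t * Δy (t - (i.val + 1 : ℤ))))
          - ∑ t ∈ Finset.Icc (1:ℤ) (T:ℤ),
            (∑ i : Fin nb, b i * (μ t * Δu (t - (i.val + 1 : ℤ))))
          + ∑ t ∈ Finset.Icc (1:ℤ) (T:ℤ), μ t * Δy t := by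
      rw [← Finset.sum_sub_distrib, ← Finset.sum_add_distrib]
      apply Finset.sum_congr rfl
      intro t ht
      have := hres t ht
      have hht : h t = (∑ i : Fin na, a i * Δy (t - (i.val + 1 : ℤ)))
          - (∑ i : Fin nb, b i * Δu (t - (i.val + 1 : ℤ))) + Δy t := by linarith
      rw [hht]
      rw [add_mul, sub_mul, Finset.sum_mul, Finset.sum_mul]
      congr 1
      · congr 1 <;> (apply Finset.sum_congr rfl; intro i _; ring)
      · ring
    rw [step1]
    have swapA : ∑ t ∈ Finset.Icc (1:ℤ) (T:ℤ),
          (∑ i : Fin na, a i * (μ t * Δy (t - (i.val + 1 : ℤ))))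
        = ∑ s ∈ Finset.Icc (-(na : ℤ) + 1) (T : ℤ),
            Δy s * (∑ i : Fin na, a i * μ (s + (i.val + 1 : ℤ))) := by
      rw [Finset.sum_comm]
      have : ∀ i : Fin na,
          ∑ t ∈ Finset.Icc (1:ℤ) (T:ℤ), a i * (μ t * Δy (t - (i.val + 1 : ℤ)))
          = ∑ s ∈ Finset.Icc (-(na : ℤ) + 1) (T : ℤ),
              a i * (μ (s + (i.val + 1 : ℤ)) * Δy s) := by
        intro i
        have hi : (i.val : ℤ) < na := by exact_mod_cast i.isLt
        rw [← Finset.mul_sum, ← Finset.mul_sum]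
        congr 1
        exact shift_sum_aux T μ hμ0 (i.val + 1) _ _ (by omega) (by omega)
          (fun s => Δy s)
      rw [Finset.sum_congr rfl (fun i _ => this i)]
      rw [Finset.sum_comm]
      apply Finset.sum_congr rfl
      intro s _
      rw [Finset.mul_sum]
      apply Finset.sum_congr rfl
      intro i _; ring
    have swapB : ∑ t ∈ Finset.Icc (1:ℤ) (T:ℤ),
          (∑ i : Fin nb, b i * (μ t * Δu (t - (i.val + 1 : ℤ))))
        = ∑ s ∈ Finset.Icc (-(nb : ℤ) + 1) ((T : ℤ) - 1),
            Δu s * (∑ i : Fin nb, b i * μ (s + (i.val + 1 : ℤ))) := by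
      rw [Finset.sum_comm]
      have : ∀ i : Fin nb,
          ∑ t ∈ Finset.Icc (1:ℤ) (T:ℤ), b i * (μ t * Δu (t - (i.val + 1 : ℤ)))
          = ∑ s ∈ Finset.Icc (-(nb : ℤ) + 1) ((T : ℤ) - 1),
              b i * (μ (s + (i.val + 1 : ℤ)) * Δu s) := by
        intro i
        have hi : (i.val : ℤ) < nb := by exact_mod_cast i.isLt
        rw [← Finset.mul_sum, ← Finset.mul_sum]
        congr 1
        exact shift_sum_aux T μ hμ0 (i.val + 1) _ _ (by omega) (by omega)
          (fun s => Δu s)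
      rw [Finset.sum_congr rfl (fun i _ => this i)]
      rw [Finset.sum_comm]
      apply Finset.sum_congr rfl
      intro s _
      rw [Finset.mul_sum]
      apply Finset.sum_congr rfl
      intro i _; ring
    have extC : ∑ t ∈ Finset.Icc (1:ℤ) (T:ℤ), μ t * Δy t
        = ∑ s ∈ Finset.Icc (-(na : ℤ) + 1) (T : ℤ), Δy s * μ s := by
      have hsub : Finset.Icc (1:ℤ) (T:ℤ) ⊆ Finset.Icc (-(na : ℤ) + 1) (T : ℤ) := by
        intro x hx; simp only [Finset.mem_Icc] at *; omega
      rw [Finset.sum_subset hsub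
        (by intro x hx hx'; have : μ x = 0 := hμ0 x hx'; simp [this])]
      apply Finset.sum_congr rfl; intro s _; ring
    rw [swapA, swapB, extC]
    have comb : ∑ s ∈ Finset.Icc (-(na : ℤ) + 1) (T : ℤ),
          Δy s * (μ s + ∑ i : Fin na, a i * μ (s + (i.val + 1 : ℤ)))
        = (∑ s ∈ Finset.Icc (-(na : ℤ) + 1) (T : ℤ),
            Δy s * (∑ i : Fin na, a i * μ (s + (i.val + 1 : ℤ))))
          + ∑ s ∈ Finset.Icc (-(na : ℤ) + 1) (T : ℤ), Δy s * μ s := by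
      rw [← Finset.sum_add_distrib]
      apply Finset.sum_congr rfl
      intro s _; ring
    linarith
  -- rewrite via matching conditions
  have key2 : ∑ t ∈ Finset.Icc (1:ℤ) (T:ℤ), h t * μ t
      = (∑ s ∈ Finset.Icc (-(na : ℤ) + 1) (T : ℤ), Δy s * -(ζp s - ζm s))
        - ∑ s ∈ Finset.Icc (-(nb : ℤ) + 1) ((T : ℤ) - 1), Δu s * (ψp s - ψm s) := by
    rw [key]
    congr 1
    · apply Finset.sum_congr rfl
      intro s hs
      rw [hmatchy s hs]; ring
    · apply Finset.sum_congr rfl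
      intro s hs
      rw [hmatchu s hs]
  -- bounds
  have bndy : -(εy * ∑ s ∈ Finset.Icc (-(na : ℤ) + 1) (T : ℤ), (ζp s + ζm s))
      ≤ ∑ s ∈ Finset.Icc (-(na : ℤ) + 1) (T : ℤ), Δy s * -(ζp s - ζm s) := by
    rw [Finset.mul_sum, ← Finset.sum_neg_distrib]
    apply Finset.sum_le_sum
    intro s hs
    exact bound_aux _ _ _ _ (hy s hs) (hζp s hs) (hζm s hs)
  have bndu : -(εu * ∑ s ∈ Finset.Icc (-(nb : ℤ) + 1) ((T : ℤ) - 1), (ψp s + ψm s))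
      ≤ -∑ s ∈ Finset.Icc (-(nb : ℤ) + 1) ((T : ℤ) - 1), Δu s * (ψp s - ψm s) := by
    rw [Finset.mul_sum, ← Finset.sum_neg_distrib, ← Finset.sum_neg_distrib]
    apply Finset.sum_le_sum
    intro s hs
    have := bound_aux _ _ _ _ (hu s hs) (hψp s hs) (hψm s hs)
    linarith
  linarith [key2, bndy, bndu]
end

section
/- Fix positive integers T, n_a, n_b, reals ε_u ≥ 0, ε_y ≥ 0, vectors a ∈ ℝ^{n_a}, b ∈ ℝ^{n_b}, h ∈ ℝ^T, and a real number q. Then exactly one of the following two statements holds: (I) q ≤ 0 and there exists a feasible noise pair (Δu, Δy); (II) there exist ψ⁺, ψ⁻ : {−n_b+1,…,T−1} → [0,∞), ζ⁺, ζ⁻ : {−n_a+1,…,T} → [0,∞), and μ ∈ ℝ^T (extended by zero outside {1,…,T}) such that ψ⁺_s − ψ⁻_s = Σ_{i=1}^{n_b} b_i μ_{s+i} for all s ∈ {−n_b+1,…,T−1}, ζ⁺_s − ζ⁻_s = −( μ_s + Σ_{i=1}^{n_a} a_i μ_{s+i} ) for all s ∈ {−n_a+1,…,T}, and −q + Σ_{t=1}^T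 h_t μ_t + ε_u Σ_s (ψ⁺_s + ψ⁻_s) + ε_y Σ_s (ζ⁺_s + ζ⁻_s) < 0. (Pointwise strong-alternative content of Theorem 3, since the eliminated constraints are affine in the noise variables.) -/
/-!
Pairing the equations with multipliers `μ` supported on `{1,…,T}` and summing by parts moves
the lags onto `μ`: `∑ μ_t r_t(Δu, Δy) = ∑ h_t μ_t + ∑ Δu_s β_s - ∑ Δy_s γ_s` with
`β = ∑ b_i μ_{·+i}` and `γ = μ + ∑ a_i μ_{·+i}`. Over the noise box this is maximal at a sign
pattern, with value `V(μ) = ∑ h_t μ_t + ε_u ∑ |β_s| + ε_y ∑ |γ_s|`, and a certificate of (II) is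
the same as a `μ` with `-q + V(μ) < 0` (split `β` and `-γ` into positive and negative parts).
A feasible noise pair forces `V ≥ 0`, so (I) excludes (II). If no feasible pair exists, `0` lies
outside the compact convex image of the box under the affine residual map, and a separating
hyperplane gives `μ` with `V(μ) < 0`, which can be scaled below any `q`.
-/

open Finset

theorem exists_forall_sum_mul_neg_of_zero_notMem {ι : Type*} [Fintype ι] {K : Set (ι → ℝ)}
    (hconv : Convex ℝ K) (hclosed : IsClosed K) (h0 : 0 ∉ K) :
    ∃ μ : ι → ℝ, ∀ v ∈ K, ∑ i, μ i * v i < 0 := by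
  classical
  obtain ⟨f, u, hfK, hu⟩ := geometric_hahn_banach_closed_point hconv hclosed h0
  refine ⟨fun i => f fun j => if i = j then 1 else 0, fun v hv => ?_⟩
  have hf : f v = ∑ i, (f fun j => if i = j then 1 else 0) * v i := by
    rw [← ContinuousLinearMap.coe_coe, LinearMap.pi_apply_eq_sum_univ (f : (ι → ℝ) →ₗ[ℝ] ℝ)]
    exact sum_congr rfl fun i _ => mul_comm _ _
  linarith [hfK v hv, map_zero f, hf]

theorem sum_Icc_mul_sub_eq {μ x : ℤ → ℝ} {T L R k : ℤ} (hμ : ∀ t ∉ Icc 1 T, μ t = 0)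
    (hL : L ≤ 1 - k) (hR : T - k ≤ R) :
    ∑ t ∈ Icc 1 T, μ t * x (t - k) = ∑ s ∈ Icc L R, x s * μ (s + k) := by
  calc ∑ t ∈ Icc 1 T, μ t * x (t - k) = ∑ s ∈ Icc (1 - k) (T - k), x s * μ (s + k) := by
        refine sum_nbij' (· - k) (· + k) ?_ ?_ ?_ ?_ ?_ <;> intros <;> simp_all <;>
          first | omega | ring
    _ = ∑ s ∈ Icc L R, x s * μ (s + k) := by
        refine sum_subset (Icc_subset_Icc hL hR) fun s _ hs => ?_
        rw [hμ (s + k) (by simp only [mem_Icc] at *; omega), mul_zero]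

section LagOperators

variable {n : ℕ}

def lagSum (c : Fin n → ℝ) (x : ℤ → ℝ) (t : ℤ) : ℝ := ∑ i : Fin n, c i * x (t - (i.val + 1 : ℤ))

def leadSum (c : Fin n → ℝ) (μ : ℤ → ℝ) (s : ℤ) : ℝ := ∑ i : Fin n, c i * μ (s + (i.val + 1 : ℤ))

theorem sum_mul_lagSum (c : Fin n → ℝ) {μ : ℤ → ℝ} (x : ℤ → ℝ) {T L R : ℤ}
    (hμ : ∀ t ∉ Icc 1 T, μ t = 0) (hL : L ≤ 1 - n) (hR : T - 1 ≤ R) :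
    ∑ t ∈ Icc 1 T, μ t * lagSum c x t = ∑ s ∈ Icc L R, x s * leadSum c μ s := by
  simp only [lagSum, leadSum, mul_sum]
  rw [sum_comm, sum_comm (s := Icc L R)]
  refine sum_congr rfl fun i _ => ?_
  simp only [mul_left_comm _ (c i), ← mul_sum]
  have := i.isLt
  rw [sum_Icc_mul_sub_eq (k := (i : ℤ) + 1) (L := L) (R := R) hμ (by omega) (by omega)]

theorem leadSum_smul (c : Fin n → ℝ) (r : ℝ) (μ : ℤ → ℝ) (s : ℤ) :
    leadSum c (r • μ) s = r * leadSum c μ s := by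
  simp only [leadSum, Pi.smul_apply, smul_eq_mul, mul_sum, mul_left_comm r]

end LagOperators

section Boxes

/-- Zero outside `I`, so that the box is compact in the product topology of `ℤ → ℝ`. -/
noncomputable def boxOn (I : Finset ℤ) (ε : ℝ) : Set (ℤ → ℝ) :=
  Set.Icc (-(I : Set ℤ).indicator fun _ => ε) ((I : Set ℤ).indicator fun _ => ε)

variable {I : Finset ℤ} {ε : ℝ}

theorem abs_le_of_mem_boxOn {x : ℤ → ℝ} (hx : x ∈ boxOn I ε) {s : ℤ} (hs : s ∈ I) :
    |x s| ≤ ε :=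
  abs_le.2 ⟨by simpa [hs] using hx.1 s, by simpa [hs] using hx.2 s⟩

theorem sum_mul_le_mul_sum_abs {x y : ℤ → ℝ} (hx : ∀ s ∈ I, |x s| ≤ ε) :
    ∑ s ∈ I, x s * y s ≤ ε * ∑ s ∈ I, |y s| := by
  rw [mul_sum]
  refine sum_le_sum fun s hs => (le_abs_self _).trans ?_
  rw [abs_mul]
  exact mul_le_mul_of_nonneg_right (hx s hs) (abs_nonneg _)

theorem exists_mem_boxOn_sum_mul_eq (hε : 0 ≤ ε) (y : ℤ → ℝ) :
    ∃ x ∈ boxOn I ε, ∑ s ∈ I, x s * y s = ε * ∑ s ∈ I, |y s| := by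
  refine ⟨(I : Set ℤ).indicator fun s => ε * SignType.sign (y s), ?_, ?_⟩
  · refine ⟨fun s => ?_, fun s => ?_⟩ <;> by_cases hs : s ∈ I <;>
      rcases lt_trichotomy (y s) 0 with hy | hy | hy <;> simp [hs, hy, hε]
  · rw [mul_sum]
    refine sum_congr rfl fun s hs => ?_
    rw [Set.indicator_of_mem (mem_coe.2 hs), mul_assoc, sign_mul_self]

end Boxes

section ARX

variable {na nb : ℕ} (T : ℕ) (εu εy : ℝ) (a : Fin na → ℝ) (b : Fin nb → ℝ) (h : ℤ → ℝ)

def arxResidual (Δu Δy : ℤ → ℝ) (t : ℤ) : ℝ := h t - lagSum a Δy t + lagSum b Δu t - Δy t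

def IsFeasibleNoise (Δu Δy : ℤ → ℝ) : Prop :=
  (∀ s ∈ Icc (-(nb : ℤ) + 1) ((T : ℤ) - 1), |Δu s| ≤ εu) ∧
  (∀ s ∈ Icc (-(na : ℤ) + 1) (T : ℤ), |Δy s| ≤ εy) ∧
  ∀ t ∈ Icc (1 : ℤ) (T : ℤ), arxResidual a b h Δu Δy t = 0

/-- The maximum of `∑ μ_t r_t` over the noise box. -/
noncomputable def arxDualValue (μ : ℤ → ℝ) : ℝ :=
  ∑ t ∈ Icc (1 : ℤ) T, h t * μ t
    + εu * ∑ s ∈ Icc (-(nb : ℤ) + 1) ((T : ℤ) - 1), |leadSum b μ s|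
    + εy * ∑ s ∈ Icc (-(na : ℤ) + 1) (T : ℤ), |μ s + leadSum a μ s|

def IsDualCertificate (q : ℝ) (ψp ψm ζp ζm μ : ℤ → ℝ) : Prop :=
  (∀ s ∈ Icc (-(nb : ℤ) + 1) ((T : ℤ) - 1), 0 ≤ ψp s) ∧
  (∀ s ∈ Icc (-(nb : ℤ) + 1) ((T : ℤ) - 1), 0 ≤ ψm s) ∧
  (∀ s ∈ Icc (-(na : ℤ) + 1) (T : ℤ), 0 ≤ ζp s) ∧
  (∀ s ∈ Icc (-(na : ℤ) + 1) (T : ℤ), 0 ≤ ζm s) ∧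
  (∀ t : ℤ, t ∉ Icc (1 : ℤ) (T : ℤ) → μ t = 0) ∧
  (∀ s ∈ Icc (-(nb : ℤ) + 1) ((T : ℤ) - 1), ψp s - ψm s = leadSum b μ s) ∧
  (∀ s ∈ Icc (-(na : ℤ) + 1) (T : ℤ), ζp s - ζm s = -(μ s + leadSum a μ s)) ∧
  (-q + (∑ t ∈ Icc (1 : ℤ) (T : ℤ), h t * μ t)
    + εu * (∑ s ∈ Icc (-(nb : ℤ) + 1) ((T : ℤ) - 1), (ψp s + ψm s))
    + εy * (∑ s ∈ Icc (-(na : ℤ) + 1) (T : ℤ), (ζp s + ζm s)) < 0)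

variable {T εu εy a b h}

theorem sum_mul_arxResidual {μ : ℤ → ℝ} (hμ : ∀ t ∉ Icc (1 : ℤ) T, μ t = 0) (Δu Δy : ℤ → ℝ) :
    ∑ t ∈ Icc (1 : ℤ) T, μ t * arxResidual a b h Δu Δy t =
      ∑ t ∈ Icc (1 : ℤ) T, h t * μ t
        + ∑ s ∈ Icc (-(nb : ℤ) + 1) ((T : ℤ) - 1), Δu s * leadSum b μ s
        - ∑ s ∈ Icc (-(na : ℤ) + 1) (T : ℤ), Δy s * (μ s + leadSum a μ s) := by
  have hy : ∑ t ∈ Icc (1 : ℤ) T, μ t * Δy t = ∑ s ∈ Icc (-(na : ℤ) + 1) (T : ℤ), Δy s * μ s := by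
    simpa using sum_Icc_mul_sub_eq (x := Δy) (k := 0) (L := -(na : ℤ) + 1) (R := T) hμ
      (by omega) (by omega)
  simp only [arxResidual, mul_sub, mul_add, sum_sub_distrib, sum_add_distrib,
    sum_mul_lagSum a Δy hμ (L := -(na : ℤ) + 1) (R := T) (by omega) (by omega),
    sum_mul_lagSum b Δu hμ (L := -(nb : ℤ) + 1) (R := T - 1) (by omega) (by omega), hy,
    mul_comm (μ _) (h _)]
  ring

theorem sum_mul_arxResidual_le_arxDualValue {μ : ℤ → ℝ} (hμ : ∀ t ∉ Icc (1 : ℤ) T, μ t = 0)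
    {Δu Δy : ℤ → ℝ} (hΔu : ∀ s ∈ Icc (-(nb : ℤ) + 1) ((T : ℤ) - 1), |Δu s| ≤ εu)
    (hΔy : ∀ s ∈ Icc (-(na : ℤ) + 1) (T : ℤ), |Δy s| ≤ εy) :
    ∑ t ∈ Icc (1 : ℤ) T, μ t * arxResidual a b h Δu Δy t ≤ arxDualValue T εu εy a b h μ := by
  have hu := sum_mul_le_mul_sum_abs (y := leadSum b μ) hΔu
  have hy := sum_mul_le_mul_sum_abs (x := -Δy) (y := fun s => μ s + leadSum a μ s)
    fun s hs => by simpa only [Pi.neg_apply, abs_neg] using hΔy s hs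
  simp only [Pi.neg_apply, neg_mul, sum_neg_distrib] at hy
  rw [sum_mul_arxResidual hμ, arxDualValue]
  linarith

theorem exists_mem_boxOn_sum_mul_arxResidual_eq (hεu : 0 ≤ εu) (hεy : 0 ≤ εy) {μ : ℤ → ℝ}
    (hμ : ∀ t ∉ Icc (1 : ℤ) T, μ t = 0) :
    ∃ z ∈ boxOn (Icc (-(nb : ℤ) + 1) ((T : ℤ) - 1)) εu ×ˢ boxOn (Icc (-(na : ℤ) + 1) T) εy,
      ∑ t ∈ Icc (1 : ℤ) T, μ t * arxResidual a b h z.1 z.2 t = arxDualValue T εu εy a b h μ := by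
  obtain ⟨Δu, hΔu, hu⟩ := exists_mem_boxOn_sum_mul_eq hεu (leadSum b μ)
  obtain ⟨Δy, hΔy, hy⟩ := exists_mem_boxOn_sum_mul_eq hεy fun s => -(μ s + leadSum a μ s)
  simp only [mul_neg, sum_neg_distrib, abs_neg] at hy
  refine ⟨(Δu, Δy), ⟨hΔu, hΔy⟩, ?_⟩
  rw [sum_mul_arxResidual hμ, arxDualValue, hu]
  linarith

theorem arxResidual_convexCombination (z w : (ℤ → ℝ) × (ℤ → ℝ)) {p r : ℝ} (hpr : p + r = 1)
    (t : ℤ) :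
    arxResidual a b h (p • z + r • w).1 (p • z + r • w).2 t =
      p * arxResidual a b h z.1 z.2 t + r * arxResidual a b h w.1 w.2 t := by
  simp only [arxResidual, lagSum, Prod.fst_add, Prod.snd_add, Prod.smul_fst, Prod.smul_snd,
    Pi.add_apply, Pi.smul_apply, smul_eq_mul, mul_add, sum_add_distrib, mul_left_comm _ p,
    mul_left_comm _ r, ← mul_sum]
  linear_combination (-h t) * hpr

theorem exists_arxDualValue_neg (hεu : 0 ≤ εu) (hεy : 0 ≤ εy)
    (hinf : ¬ ∃ Δu Δy, IsFeasibleNoise T εu εy a b h Δu Δy) :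
    ∃ μ : ℤ → ℝ, (∀ t ∉ Icc (1 : ℤ) T, μ t = 0) ∧ arxDualValue T εu εy a b h μ < 0 := by
  set B := boxOn (Icc (-(nb : ℤ) + 1) ((T : ℤ) - 1)) εu ×ˢ boxOn (Icc (-(na : ℤ) + 1) T) εy
  let Φ : (ℤ → ℝ) × (ℤ → ℝ) → (Icc (1 : ℤ) T → ℝ) := fun z t => arxResidual a b h z.1 z.2 t
  have hΦ : Continuous Φ := continuous_pi fun t => by
    simp only [Φ, arxResidual, lagSum]
    fun_prop
  have hconv : Convex ℝ (Φ '' B) := by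
    rintro _ ⟨z, hz, rfl⟩ _ ⟨w, hw, rfl⟩ p r hp hr hpr
    refine ⟨p • z + r • w, ((convex_Icc _ _).prod (convex_Icc _ _)) hz hw hp hr hpr, ?_⟩
    exact funext fun t => arxResidual_convexCombination z w hpr t
  have hclosed : IsClosed (Φ '' B) := ((isCompact_Icc.prod isCompact_Icc).image hΦ).isClosed
  have h0 : 0 ∉ Φ '' B := by
    rintro ⟨z, hz, hz0⟩
    exact hinf ⟨z.1, z.2, fun s hs => abs_le_of_mem_boxOn hz.1 hs,
      fun s hs => abs_le_of_mem_boxOn hz.2 hs, fun t ht => congrFun hz0 ⟨t, ht⟩⟩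
  obtain ⟨μ₀, hμ₀⟩ := exists_forall_sum_mul_neg_of_zero_notMem hconv hclosed h0
  let μ : ℤ → ℝ := fun t => if ht : t ∈ Icc (1 : ℤ) T then μ₀ ⟨t, ht⟩ else 0
  have hμ : ∀ t ∉ Icc (1 : ℤ) T, μ t = 0 := fun t ht => dif_neg ht
  obtain ⟨z, hzB, hz⟩ := exists_mem_boxOn_sum_mul_arxResidual_eq hεu hεy (a := a) (h := h) hμ
  refine ⟨μ, hμ, ?_⟩
  calc arxDualValue T εu εy a b h μ
      = ∑ t : Icc (1 : ℤ) T, μ t * arxResidual a b h z.1 z.2 t := by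
        rw [← hz]; exact (sum_coe_sort _ _).symm
    _ = ∑ t, μ₀ t * Φ z t :=
        sum_congr rfl fun t _ => by simp only [μ, Φ, dif_pos t.2, Subtype.coe_eta]
    _ < 0 := hμ₀ _ ⟨z, hzB, rfl⟩

theorem arxDualValue_smul {r : ℝ} (hr : 0 ≤ r) (μ : ℤ → ℝ) :
    arxDualValue T εu εy a b h (r • μ) = r * arxDualValue T εu εy a b h μ := by
  simp only [arxDualValue, leadSum_smul, Pi.smul_apply, smul_eq_mul, ← mul_add, abs_mul,
    abs_of_nonneg hr, ← mul_sum, mul_left_comm (h _)]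
  ring

theorem exists_arxDualValue_lt (hεu : 0 ≤ εu) (hεy : 0 ≤ εy)
    (hinf : ¬ ∃ Δu Δy, IsFeasibleNoise T εu εy a b h Δu Δy) (r : ℝ) :
    ∃ μ : ℤ → ℝ, (∀ t ∉ Icc (1 : ℤ) T, μ t = 0) ∧ arxDualValue T εu εy a b h μ < r := by
  obtain ⟨μ, hμ, hneg⟩ := exists_arxDualValue_neg hεu hεy hinf
  refine ⟨((|r| + 1) / -arxDualValue T εu εy a b h μ) • μ, fun t ht => by simp [hμ t ht], ?_⟩
  rw [arxDualValue_smul (by apply div_nonneg <;> linarith [abs_nonneg r]) μ,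
    div_mul_eq_mul_div, div_neg, mul_div_cancel_right₀ _ hneg.ne]
  linarith [neg_abs_le r]

theorem isDualCertificate_of_arxDualValue {q : ℝ} {μ : ℤ → ℝ}
    (hμ : ∀ t ∉ Icc (1 : ℤ) T, μ t = 0) (hq : -q + arxDualValue T εu εy a b h μ < 0) :
    IsDualCertificate T εu εy a b h q (fun s => (leadSum b μ s)⁺) (fun s => (leadSum b μ s)⁻)
      (fun s => (μ s + leadSum a μ s)⁻) (fun s => (μ s + leadSum a μ s)⁺) μ := by
  refine ⟨fun _ _ => posPart_nonneg _, fun _ _ => negPart_nonneg _, fun _ _ => negPart_nonneg _,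
    fun _ _ => posPart_nonneg _, hμ, fun _ _ => posPart_sub_negPart _,
    fun _ _ => by rw [← posPart_sub_negPart (μ _ + _), neg_sub], ?_⟩
  simp only [posPart_add_negPart, add_comm (_⁻ : ℝ), posPart_add_negPart]
  simpa only [arxDualValue, add_assoc] using hq

theorem arxDualValue_lt_of_isDualCertificate (hεu : 0 ≤ εu) (hεy : 0 ≤ εy) {q : ℝ}
    {ψp ψm ζp ζm μ : ℤ → ℝ}
    (hc : IsDualCertificate T εu εy a b h q ψp ψm ζp ζm μ) :
    -q + arxDualValue T εu εy a b h μ < 0 := by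
  obtain ⟨hψp, hψm, hζp, hζm, -, hψ, hζ, hQ⟩ := hc
  have hu : ∑ s ∈ Icc (-(nb : ℤ) + 1) ((T : ℤ) - 1), |leadSum b μ s| ≤
      ∑ s ∈ Icc (-(nb : ℤ) + 1) ((T : ℤ) - 1), (ψp s + ψm s) :=
    sum_le_sum fun s hs => by
      rw [← hψ s hs]
      exact (abs_sub _ _).trans_eq (by rw [abs_of_nonneg (hψp s hs), abs_of_nonneg (hψm s hs)])
  have hy : ∑ s ∈ Icc (-(na : ℤ) + 1) (T : ℤ), |μ s + leadSum a μ s| ≤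
      ∑ s ∈ Icc (-(na : ℤ) + 1) (T : ℤ), (ζp s + ζm s) :=
    sum_le_sum fun s hs => by
      rw [← abs_neg, ← hζ s hs]
      exact (abs_sub _ _).trans_eq (by rw [abs_of_nonneg (hζp s hs), abs_of_nonneg (hζm s hs)])
  rw [arxDualValue]
  linarith [mul_le_mul_of_nonneg_left hu hεu, mul_le_mul_of_nonneg_left hy hεy]

theorem not_exists_isDualCertificate (hεu : 0 ≤ εu) (hεy : 0 ≤ εy) {q : ℝ}
    (hI : q ≤ 0 ∧ ∃ Δu Δy, IsFeasibleNoise T εu εy a b h Δu Δy) :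
    ¬ ∃ ψp ψm ζp ζm μ, IsDualCertificate T εu εy a b h q ψp ψm ζp ζm μ := by
  rintro ⟨ψp, ψm, ζp, ζm, μ, hc⟩
  obtain ⟨hq, Δu, Δy, hΔu, hΔy, hres⟩ := hI
  have hzero : ∑ t ∈ Icc (1 : ℤ) T, μ t * arxResidual a b h Δu Δy t = 0 :=
    sum_eq_zero fun t ht => by rw [hres t ht, mul_zero]
  linarith [arxDualValue_lt_of_isDualCertificate hεu hεy hc,
    sum_mul_arxResidual_le_arxDualValue (a := a) (b := b) (h := h) hc.2.2.2.2.1 hΔu hΔy]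

theorem exists_isDualCertificate (hεu : 0 ≤ εu) (hεy : 0 ≤ εy) {q : ℝ}
    (hI : ¬ (q ≤ 0 ∧ ∃ Δu Δy, IsFeasibleNoise T εu εy a b h Δu Δy)) :
    ∃ ψp ψm ζp ζm μ, IsDualCertificate T εu εy a b h q ψp ψm ζp ζm μ := by
  obtain ⟨μ, hμ, hV⟩ : ∃ μ : ℤ → ℝ, (∀ t ∉ Icc (1 : ℤ) T, μ t = 0) ∧
      -q + arxDualValue T εu εy a b h μ < 0 := by
    rcases not_and_or.1 hI with hq | hinf
    · exact ⟨0, fun _ _ => rfl, by simp [arxDualValue, leadSum]; linarith⟩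
    · obtain ⟨μ, hμ, hV⟩ := exists_arxDualValue_lt hεu hεy hinf q
      exact ⟨μ, hμ, by linarith⟩
  exact ⟨_, _, _, _, μ, isDualCertificate_of_arxDualValue hμ hV⟩

end ARX

theorem alternatives_strong_alternative_general
    (T na nb : ℕ)
    (εu εy : ℝ) (hεu : 0 ≤ εu) (hεy : 0 ≤ εy)
    (a : Fin na → ℝ) (b : Fin nb → ℝ) (h : ℤ → ℝ) (q : ℝ) :
    Xor'
      (q ≤ 0 ∧ ∃ Δu Δy : ℤ → ℝ,
        (∀ s ∈ Finset.Icc (-(nb : ℤ) + 1) ((T : ℤ) - 1), |Δu s| ≤ εu) ∧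
        (∀ s ∈ Finset.Icc (-(na : ℤ) + 1) (T : ℤ), |Δy s| ≤ εy) ∧
        (∀ t ∈ Finset.Icc (1 : ℤ) (T : ℤ),
          h t - (∑ i : Fin na, a i * Δy (t - (i.val + 1 : ℤ)))
              + (∑ i : Fin nb, b i * Δu (t - (i.val + 1 : ℤ))) - Δy t = 0))
      (∃ ψp ψm ζp ζm μ : ℤ → ℝ,
        (∀ s ∈ Finset.Icc (-(nb : ℤ) + 1) ((T : ℤ) - 1), 0 ≤ ψp s) ∧
        (∀ s ∈ Finset.Icc (-(nb : ℤ) + 1) ((T : ℤ) - 1), 0 ≤ ψm s) ∧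
        (∀ s ∈ Finset.Icc (-(na : ℤ) + 1) (T : ℤ), 0 ≤ ζp s) ∧
        (∀ s ∈ Finset.Icc (-(na : ℤ) + 1) (T : ℤ), 0 ≤ ζm s) ∧
        (∀ t : ℤ, t ∉ Finset.Icc (1 : ℤ) (T : ℤ) → μ t = 0) ∧
        (∀ s ∈ Finset.Icc (-(nb : ℤ) + 1) ((T : ℤ) - 1),
          ψp s - ψm s = ∑ i : Fin nb, b i * μ (s + (i.val + 1 : ℤ))) ∧
        (∀ s ∈ Finset.Icc (-(na : ℤ) + 1) (T : ℤ),
          ζp s - ζm s = -(μ s + ∑ i : Fin na, a i * μ (s + (i.val + 1 : ℤ)))) ∧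
        (-q + (∑ t ∈ Finset.Icc (1 : ℤ) (T : ℤ), h t * μ t)
          + εu * (∑ s ∈ Finset.Icc (-(nb : ℤ) + 1) ((T : ℤ) - 1), (ψp s + ψm s))
          + εy * (∑ s ∈ Finset.Icc (-(na : ℤ) + 1) (T : ℤ), (ζp s + ζm s)) < 0)) := by
  by_cases hI : q ≤ 0 ∧ ∃ Δu Δy, IsFeasibleNoise T εu εy a b h Δu Δy
  · exact Or.inl ⟨hI, not_exists_isDualCertificate hεu hεy hI⟩
  · exact Or.inr ⟨exists_isDualCertificate hεu hεy hI, hI⟩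

/-- Pointwise strong-alternative content of Theorem 3.  Exactly one
of the following holds: (I) `q ≤ 0` and a feasible noise pair `(Δu, Δy)` exists;
(II) there exists a dual certificate `(ψ⁺, ψ⁻, ζ⁺, ζ⁻, μ)` with the matching
conditions and negative value `Q < 0`.  Vectors `a ∈ ℝ^{n_a}`, `b ∈ ℝ^{n_b}` are
indexed so that `a i` stands for `a_{i+1}`; `μ` is extended by zero outside
`{1,…,T}`. -/
theorem alternatives_strong_alternative
    (T na nb : ℕ) (hT : 0 < T) (hna : 0 < na) (hnb : 0 < nb)
    (εu εy : ℝ) (hεu : 0 ≤ εu) (hεy : 0 ≤ εy)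
    (a : Fin na → ℝ) (b : Fin nb → ℝ) (h : ℤ → ℝ) (q : ℝ) :
    Xor'
      (q ≤ 0 ∧ ∃ Δu Δy : ℤ → ℝ,
        (∀ s ∈ Finset.Icc (-(nb : ℤ) + 1) ((T : ℤ) - 1), |Δu s| ≤ εu) ∧
        (∀ s ∈ Finset.Icc (-(na : ℤ) + 1) (T : ℤ), |Δy s| ≤ εy) ∧
        (∀ t ∈ Finset.Icc (1 : ℤ) (T : ℤ),
          h t - (∑ i : Fin na, a i * Δy (t - (i.val + 1 : ℤ)))
              + (∑ i : Fin nb, b i * Δu (t - (i.val + 1 : ℤ))) - Δy t = 0))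
      (∃ ψp ψm ζp ζm μ : ℤ → ℝ,
        (∀ s ∈ Finset.Icc (-(nb : ℤ) + 1) ((T : ℤ) - 1), 0 ≤ ψp s) ∧
        (∀ s ∈ Finset.Icc (-(nb : ℤ) + 1) ((T : ℤ) - 1), 0 ≤ ψm s) ∧
        (∀ s ∈ Finset.Icc (-(na : ℤ) + 1) (T : ℤ), 0 ≤ ζp s) ∧
        (∀ s ∈ Finset.Icc (-(na : ℤ) + 1) (T : ℤ), 0 ≤ ζm s) ∧
        (∀ t : ℤ, t ∉ Finset.Icc (1 : ℤ) (T : ℤ) → μ t = 0) ∧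
        (∀ s ∈ Finset.Icc (-(nb : ℤ) + 1) ((T : ℤ) - 1),
          ψp s - ψm s = ∑ i : Fin nb, b i * μ (s + (i.val + 1 : ℤ))) ∧
        (∀ s ∈ Finset.Icc (-(na : ℤ) + 1) (T : ℤ),
          ζp s - ζm s = -(μ s + ∑ i : Fin na, a i * μ (s + (i.val + 1 : ℤ)))) ∧
        (-q + (∑ t ∈ Finset.Icc (1 : ℤ) (T : ℤ), h t * μ t)
          + εu * (∑ s ∈ Finset.Icc (-(nb : ℤ) + 1) ((T : ℤ) - 1), (ψp s + ψm s))
          + εy * (∑ s ∈ Finset.Icc (-(na : ℤ) + 1) (T : ℤ), (ζp s + ζm s)) < 0)) :=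
  alternatives_strong_alternative_general T na nb εu εy hεu hεy a b h q
end

section
/- Let n_a ≥ 1 be an integer, a ∈ ℝ^{n_a} with Σ_{i=1}^{n_a} |a_i| ≤ γ for some real γ with 0 ≤ γ < 1, and let y : ℤ → ℝ satisfy the autonomous recursion y_t = −Σ_{i=1}^{n_a} a_i y_{t−i} for every integer t ≥ 1. Let M = max_{0 ≤ j ≤ n_a−1} |y_{−j}|. Then for every integer t ≥ 1: |y_t| ≤ γ^{⌊(t−1)/n_a⌋ + 1} · M. In particular, a superstable system's output decays geometrically (by a factor γ over each window of n_a steps) from its initial condition. -/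
/-- Geometric decay of a superstable autonomous ARX system.  If
`∑ i, |a i| ≤ γ` with `0 ≤ γ < 1` and `y` satisfies the autonomous recursion
`y t = -∑_{i=1}^{n_a} a_i y_{t-i}` for all `t ≥ 1`, then with
`M = max_{0 ≤ j ≤ n_a - 1} |y (-j)|` we have
`|y t| ≤ γ^(⌊(t-1)/n_a⌋ + 1) * M` for all `t ≥ 1`.  The vector `a ∈ ℝ^{n_a}` is
indexed so that `a i` stands for `a_{i+1}`. -/
theorem superstable_geometric_decay
    (na : ℕ) (hna : 1 ≤ na) (a : Fin na → ℝ) (γ : ℝ)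
    (hγ0 : 0 ≤ γ) (hγ1 : γ < 1)
    (ha : ∑ i, |a i| ≤ γ)
    (y : ℤ → ℝ)
    (hy : ∀ t : ℤ, 1 ≤ t → y t = -∑ i : Fin na, a i * y (t - (i.val + 1 : ℤ)))
    (M : ℝ)
    (hM : IsGreatest {r : ℝ | ∃ j ∈ Finset.Icc (0 : ℤ) ((na : ℤ) - 1), r = |y (-j)|} M) :
    ∀ t : ℤ, 1 ≤ t → |y t| ≤ γ ^ (((t - 1) / (na : ℤ)).toNat + 1) * M := by
  have hna' : (0:ℤ) < na := by exact_mod_cast hna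
  obtain ⟨⟨j0, hj0, hMj0⟩, hub⟩ := hM
  have hM0 : 0 ≤ M := by rw [hMj0]; exact abs_nonneg _
  have hbase : ∀ s : ℤ, 1 - na ≤ s → s ≤ 0 → |y s| ≤ M := by
    intro s h1 h2
    exact hub ⟨-s, Finset.mem_Icc.mpr ⟨by omega, by omega⟩, by rw [neg_neg]⟩
  have key : ∀ n : ℕ, ∀ t : ℤ, 1 ≤ t → t ≤ n →
      |y t| ≤ γ ^ (((t - 1) / (na : ℤ)).toNat + 1) * M := by
    intro n
    induction n with
    | zero => intro t h1 h2; omega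
    | succ n ih =>
      intro t ht1 htn
      set k := ((t - 1) / (na : ℤ)).toNat with hk
      have hstep : ∀ i : Fin na, |y (t - (i.val + 1 : ℤ))| ≤ γ ^ k * M := by
        intro i
        have hilt : (i.val : ℤ) < na := by exact_mod_cast i.isLt
        have hige : (0:ℤ) ≤ i.val := Int.ofNat_nonneg _
        set s := t - (i.val + 1 : ℤ) with hs
        have hslb : 1 - na ≤ s := by omega
        by_cases hpos : 1 ≤ s
        · have h1 := ih s hpos (by omega)
          have hd : (t - 1) / (na:ℤ) - 1 ≤ (s - 1) / na := by
            calc (t-1)/(na:ℤ) - 1 = (t - 1 - na) / na := by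
                  rw [show t - 1 - (na:ℤ) = (t-1) + (-1) * na by ring,
                    Int.add_mul_ediv_right _ _ (by omega : (na:ℤ) ≠ 0)]
                  ring
              _ ≤ (s-1)/na := Int.ediv_le_ediv hna' (by omega)
          have hd2 : (0:ℤ) ≤ (s-1)/na := Int.ediv_nonneg (by omega) (by omega)
          have hexp : k ≤ ((s - 1)/(na:ℤ)).toNat + 1 := by
            generalize hA : (t-1)/(na:ℤ) = A at hd hk
            generalize hB : (s-1)/(na:ℤ) = B at hd hd2 ⊢
            omega
          calc |y s| ≤ γ ^ (((s-1)/(na:ℤ)).toNat + 1) * M := h1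
            _ ≤ γ ^ k * M :=
                mul_le_mul_of_nonneg_right
                  (pow_le_pow_of_le_one hγ0 hγ1.le hexp) hM0
        · have hk0 : k = 0 := by
            have h0 : (t-1)/(na:ℤ) = 0 := Int.ediv_eq_zero_of_lt (by omega) (by omega)
            simp [hk, h0]
          rw [hk0]
          simpa using hbase s hslb (by omega)
      have hy' := hy t ht1
      calc |y t| = |∑ i : Fin na, a i * y (t - (i.val + 1 : ℤ))| := by rw [hy', abs_neg]
        _ ≤ ∑ i : Fin na, |a i * y (t - (i.val + 1:ℤ))| := Finset.abs_sum_le_sum_abs _ _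
        _ ≤ ∑ i : Fin na, |a i| * (γ ^ k * M) := by
            apply Finset.sum_le_sum
            intro i _
            rw [abs_mul]
            exact mul_le_mul_of_nonneg_left (hstep i) (abs_nonneg _)
        _ = (∑ i, |a i|) * (γ ^ k * M) := by rw [← Finset.sum_mul]
        _ ≤ γ * (γ ^ k * M) := mul_le_mul_of_nonneg_right ha (by positivity)
        _ = γ ^ (k+1) * M := by ring
  intro t ht
  exact key t.toNat t ht (by omega)
end

section
/- Fix positive integers T, n_a, n_b, reals ε_u ≥ 0, ε_y ≥ 0, ε_w ≥ 0, vectors a ∈ ℝ^{n_a}, b ∈ ℝ^{n_b}, h ∈ ℝ^T, and a real number q. Call a noise pair (Δu, Δy) (with Δu : {−n_b+1,…,T−1} → ℝ, Δy : {−n_a+1,…,T} → ℝ) w-feasible if |Δu_s| ≤ ε_u and |Δy_s| ≤ ε_y for all s, and for every t ∈ {1,…,T}: | h_t − Σ_{i=1}^{n_a} a_i Δy_{t−i} + Σ_{i=1}^{n_b} b_i Δu_{t−i} − Δy_t | ≤ ε_w. Suppose there exist ψ⁺, ψ⁻ : {−n_b+1,…,T−1} → [0,∞), ζ⁺, ζ⁻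 : {−n_a+1,…,T} → [0,∞), μ⁺, μ⁻ ∈ ℝ^T with μ⁺_t, μ⁻_t ≥ 0, such that with μ := μ⁺ − μ⁻ (extended by zero outside {1,…,T}): ψ⁺_s − ψ⁻_s = Σ_{i=1}^{n_b} b_i μ_{s+i} for all s ∈ {−n_b+1,…,T−1}; ζ⁺_s − ζ⁻_s = −( μ_s + Σ_{i=1}^{n_a} a_i μ_{s+i} ) for all s ∈ {−n_a+1,…,T}; and Q^w := −q + Σ_{t=1}^T h_t (μ⁺_t − μ⁻_t) + ε_w Σ_{t=1}^T (μ⁺_t + μ⁻_t) + ε_u Σ_s (ψ⁺_s + ψ⁻_s) + ε_y Σ_s (ζ⁺_s + ζ⁻_s) < 0. Then there is no w-feasible noise pair together with q ≤ 0; equivalently, if a w-feasible noise pair exists then q > 0. (Process-noise extension of the sufficiency direction of Theorem 3.) -/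
lemma sum_shift_aux (Tz L U k : ℤ) (μ g : ℤ → ℝ)
    (hμ0 : ∀ t : ℤ, t ∉ Finset.Icc (1 : ℤ) Tz → μ t = 0)
    (h1 : L + k ≤ 1) (h2 : Tz ≤ U + k) :
    ∑ s ∈ Finset.Icc L U, μ (s + k) * g s
      = ∑ t ∈ Finset.Icc (1 : ℤ) Tz, μ t * g (t - k) := by
  have hstep : ∑ s ∈ Finset.Icc L U, μ (s + k) * g s
      = ∑ s ∈ Finset.Icc (1 - k) (Tz - k), μ (s + k) * g s := by
    symm
    apply Finset.sum_subset
    · intro x hx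
      simp only [Finset.mem_Icc] at hx ⊢
      omega
    · intro x _ hx
      rw [hμ0 (x + k), zero_mul]
      simp only [Finset.mem_Icc] at hx ⊢
      omega
  rw [hstep]
  have hmap : (Finset.Icc (1 - k) (Tz - k)).map (addRightEmbedding k)
      = Finset.Icc (1 : ℤ) Tz := by
    rw [Finset.map_add_right_Icc]
    congr 1 <;> ring
  rw [← hmap, Finset.sum_map]
  apply Finset.sum_congr rfl
  intro x _
  simp [addRightEmbedding]

/-- Process-noise extension of the sufficiency direction of
Theorem 3.  A noise pair `(Δu, Δy)` is w-feasible if its entries obey the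
`L∞` bounds and every residual `h_t - ∑ a_i Δy_{t-i} + ∑ b_i Δu_{t-i} - Δy_t`
lies in `[-ε_w, ε_w]`.  If a dual certificate
`(ψ⁺, ψ⁻, ζ⁺, ζ⁻, μ⁺, μ⁻)` exists with the matching conditions and `Q^w < 0`,
then no w-feasible noise pair can coexist with `q ≤ 0`: if a w-feasible pair
exists then `q > 0`.  Vectors `a ∈ ℝ^{n_a}`, `b ∈ ℝ^{n_b}` are indexed so that
`a i` stands for `a_{i+1}`; `μ = μ⁺ - μ⁻` is extended by zero outside
`{1,…,T}`. -/
theorem alternatives_sufficiency_process_noise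
    (T na nb : ℕ) (hT : 0 < T) (hna : 0 < na) (hnb : 0 < nb)
    (εu εy εw : ℝ) (hεu : 0 ≤ εu) (hεy : 0 ≤ εy) (hεw : 0 ≤ εw)
    (a : Fin na → ℝ) (b : Fin nb → ℝ) (h : ℤ → ℝ) (q : ℝ)
    (ψp ψm ζp ζm μp μm μ : ℤ → ℝ)
    (hψp : ∀ s ∈ Finset.Icc (-(nb : ℤ) + 1) ((T : ℤ) - 1), 0 ≤ ψp s)
    (hψm : ∀ s ∈ Finset.Icc (-(nb : ℤ) + 1) ((T : ℤ) - 1), 0 ≤ ψm s)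
    (hζp : ∀ s ∈ Finset.Icc (-(na : ℤ) + 1) (T : ℤ), 0 ≤ ζp s)
    (hζm : ∀ s ∈ Finset.Icc (-(na : ℤ) + 1) (T : ℤ), 0 ≤ ζm s)
    (hμp : ∀ t ∈ Finset.Icc (1 : ℤ) (T : ℤ), 0 ≤ μp t)
    (hμm : ∀ t ∈ Finset.Icc (1 : ℤ) (T : ℤ), 0 ≤ μm t)
    (hμdef : ∀ t ∈ Finset.Icc (1 : ℤ) (T : ℤ), μ t = μp t - μm t)
    (hμ0 : ∀ t : ℤ, t ∉ Finset.Icc (1 : ℤ) (T : ℤ) → μ t = 0)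
    (hmatchu : ∀ s ∈ Finset.Icc (-(nb : ℤ) + 1) ((T : ℤ) - 1),
      ψp s - ψm s = ∑ i : Fin nb, b i * μ (s + (i.val + 1 : ℤ)))
    (hmatchy : ∀ s ∈ Finset.Icc (-(na : ℤ) + 1) (T : ℤ),
      ζp s - ζm s = -(μ s + ∑ i : Fin na, a i * μ (s + (i.val + 1 : ℤ))))
    (hQ : -q + (∑ t ∈ Finset.Icc (1 : ℤ) (T : ℤ), h t * (μp t - μm t))
        + εw * (∑ t ∈ Finset.Icc (1 : ℤ) (T : ℤ), (μp t + μm t))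
        + εu * (∑ s ∈ Finset.Icc (-(nb : ℤ) + 1) ((T : ℤ) - 1), (ψp s + ψm s))
        + εy * (∑ s ∈ Finset.Icc (-(na : ℤ) + 1) (T : ℤ), (ζp s + ζm s)) < 0) :
    ∀ Δu Δy : ℤ → ℝ,
      (∀ s ∈ Finset.Icc (-(nb : ℤ) + 1) ((T : ℤ) - 1), |Δu s| ≤ εu) →
      (∀ s ∈ Finset.Icc (-(na : ℤ) + 1) (T : ℤ), |Δy s| ≤ εy) →
      (∀ t ∈ Finset.Icc (1 : ℤ) (T : ℤ),
        |h t - (∑ i : Fin na, a i * Δy (t - (i.val + 1 : ℤ)))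
            + (∑ i : Fin nb, b i * Δu (t - (i.val + 1 : ℤ))) - Δy t| ≤ εw) →
      0 < q := by
  intro Δu Δy hu hy hr
  set St := Finset.Icc (1 : ℤ) (T : ℤ) with hSt
  set Su := Finset.Icc (-(nb : ℤ) + 1) ((T : ℤ) - 1) with hSu
  set Sy := Finset.Icc (-(na : ℤ) + 1) (T : ℤ) with hSy
  set r : ℤ → ℝ := fun t =>
    h t - (∑ i : Fin na, a i * Δy (t - (i.val + 1 : ℤ)))
      + (∑ i : Fin nb, b i * Δu (t - (i.val + 1 : ℤ))) - Δy t with hrdef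
  -- key equality for the u-part
  have keyU : ∑ t ∈ St, μ t * (∑ i : Fin nb, b i * Δu (t - (i.val + 1 : ℤ)))
      = ∑ s ∈ Su, (ψp s - ψm s) * Δu s := by
    calc ∑ t ∈ St, μ t * (∑ i : Fin nb, b i * Δu (t - (i.val + 1 : ℤ)))
        = ∑ t ∈ St, ∑ i : Fin nb, b i * (μ t * Δu (t - (i.val + 1 : ℤ))) := by
          refine Finset.sum_congr rfl fun t _ => ?_
          rw [Finset.mul_sum]
          refine Finset.sum_congr rfl fun i _ => by ring
      _ = ∑ i : Fin nb, ∑ t ∈ St, b i * (μ t * Δu (t - (i.val + 1 : ℤ))) :=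
          Finset.sum_comm
      _ = ∑ i : Fin nb, b i * ∑ s ∈ Su, μ (s + (i.val + 1 : ℤ)) * Δu s := by
          refine Finset.sum_congr rfl fun i _ => ?_
          rw [← Finset.mul_sum,
            sum_shift_aux (T : ℤ) (-(nb : ℤ) + 1) ((T : ℤ) - 1)
              ((i.val + 1 : ℤ)) μ Δu hμ0 (by omega) (by omega)]
      _ = ∑ s ∈ Su, ∑ i : Fin nb, b i * (μ (s + (i.val + 1 : ℤ)) * Δu s) := by
          rw [Finset.sum_comm]
          refine Finset.sum_congr rfl fun i _ => by rw [Finset.mul_sum]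
      _ = ∑ s ∈ Su, (ψp s - ψm s) * Δu s := by
          refine Finset.sum_congr rfl fun s hs => ?_
          rw [hmatchu s hs, Finset.sum_mul]
          refine Finset.sum_congr rfl fun i _ => by ring
  -- key equality for the y-part
  have keyY : ∑ t ∈ St, μ t * ((∑ i : Fin na, a i * Δy (t - (i.val + 1 : ℤ))) + Δy t)
      = ∑ s ∈ Sy, (-(ζp s - ζm s)) * Δy s := by
    have hy0 : ∑ t ∈ St, μ t * Δy t = ∑ s ∈ Sy, μ s * Δy s := by
      have := sum_shift_aux (T : ℤ) (-(na : ℤ) + 1) (T : ℤ) 0 μ Δy hμ0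
        (by omega) (by omega)
      simpa using this.symm
    calc ∑ t ∈ St, μ t * ((∑ i : Fin na, a i * Δy (t - (i.val + 1 : ℤ))) + Δy t)
        = (∑ t ∈ St, μ t * (∑ i : Fin na, a i * Δy (t - (i.val + 1 : ℤ))))
          + ∑ t ∈ St, μ t * Δy t := by
          rw [← Finset.sum_add_distrib]
          refine Finset.sum_congr rfl fun t _ => by ring
      _ = (∑ s ∈ Sy, (∑ i : Fin na, a i * μ (s + (i.val + 1 : ℤ))) * Δy s)
          + ∑ s ∈ Sy, μ s * Δy s := by
          rw [hy0]
          congr 1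
          calc ∑ t ∈ St, μ t * (∑ i : Fin na, a i * Δy (t - (i.val + 1 : ℤ)))
              = ∑ t ∈ St, ∑ i : Fin na, a i * (μ t * Δy (t - (i.val + 1 : ℤ))) := by
                refine Finset.sum_congr rfl fun t _ => ?_
                rw [Finset.mul_sum]
                refine Finset.sum_congr rfl fun i _ => by ring
            _ = ∑ i : Fin na, ∑ t ∈ St, a i * (μ t * Δy (t - (i.val + 1 : ℤ))) :=
                Finset.sum_comm
            _ = ∑ i : Fin na, a i * ∑ s ∈ Sy, μ (s + (i.val + 1 : ℤ)) * Δy s := by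
                refine Finset.sum_congr rfl fun i _ => ?_
                rw [← Finset.mul_sum,
                  sum_shift_aux (T : ℤ) (-(na : ℤ) + 1) (T : ℤ)
                    ((i.val + 1 : ℤ)) μ Δy hμ0 (by omega) (by omega)]
            _ = ∑ s ∈ Sy, ∑ i : Fin na, a i * (μ (s + (i.val + 1 : ℤ)) * Δy s) := by
                rw [Finset.sum_comm]
                refine Finset.sum_congr rfl fun i _ => by rw [Finset.mul_sum]
            _ = ∑ s ∈ Sy, (∑ i : Fin na, a i * μ (s + (i.val + 1 : ℤ))) * Δy s := by
                refine Finset.sum_congr rfl fun s _ => ?_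
                rw [Finset.sum_mul]
                refine Finset.sum_congr rfl fun i _ => by ring
      _ = ∑ s ∈ Sy, (-(ζp s - ζm s)) * Δy s := by
          rw [← Finset.sum_add_distrib]
          refine Finset.sum_congr rfl fun s hs => ?_
          rw [hmatchy s hs]
          ring
  -- decomposition of the objective sum
  have hdecomp : ∑ t ∈ St, h t * (μp t - μm t)
      = (∑ t ∈ St, μ t * r t) + (∑ s ∈ Sy, (-(ζp s - ζm s)) * Δy s)
        - ∑ s ∈ Su, (ψp s - ψm s) * Δu s := by
    rw [← keyU, ← keyY, ← Finset.sum_add_distrib, ← Finset.sum_sub_distrib]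
    refine Finset.sum_congr rfl fun t ht => ?_
    rw [← hμdef t ht, hrdef]
    ring
  -- bounds
  have B1 : -(εw * ∑ t ∈ St, (μp t + μm t)) ≤ ∑ t ∈ St, μ t * r t := by
    rw [Finset.mul_sum, ← Finset.sum_neg_distrib]
    refine Finset.sum_le_sum fun t ht => ?_
    have h1 : |μ t * r t| ≤ (μp t + μm t) * εw := by
      rw [abs_mul]
      refine mul_le_mul ?_ (hr t ht) (abs_nonneg _)
        (by linarith [hμp t ht, hμm t ht])
      rw [hμdef t ht]
      calc |μp t - μm t| ≤ |μp t| + |μm t| := abs_sub _ _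
        _ = μp t + μm t := by
            rw [abs_of_nonneg (hμp t ht), abs_of_nonneg (hμm t ht)]
    have := neg_abs_le (μ t * r t)
    nlinarith
  have B2 : ∑ s ∈ Su, (ψp s - ψm s) * Δu s ≤ εu * ∑ s ∈ Su, (ψp s + ψm s) := by
    rw [Finset.mul_sum]
    refine Finset.sum_le_sum fun s hs => ?_
    have h1 : |(ψp s - ψm s) * Δu s| ≤ (ψp s + ψm s) * εu := by
      rw [abs_mul]
      refine mul_le_mul ?_ (hu s hs) (abs_nonneg _)
        (by linarith [hψp s hs, hψm s hs])
      calc |ψp s - ψm s| ≤ |ψp s| + |ψm s| := abs_sub _ _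
        _ = ψp s + ψm s := by
            rw [abs_of_nonneg (hψp s hs), abs_of_nonneg (hψm s hs)]
    have := le_abs_self ((ψp s - ψm s) * Δu s)
    nlinarith
  have B3 : -(εy * ∑ s ∈ Sy, (ζp s + ζm s)) ≤ ∑ s ∈ Sy, (-(ζp s - ζm s)) * Δy s := by
    rw [Finset.mul_sum, ← Finset.sum_neg_distrib]
    refine Finset.sum_le_sum fun s hs => ?_
    have h1 : |(-(ζp s - ζm s)) * Δy s| ≤ (ζp s + ζm s) * εy := by
      rw [abs_mul, abs_neg]
      refine mul_le_mul ?_ (hy s hs) (abs_nonneg _)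
        (by linarith [hζp s hs, hζm s hs])
      calc |ζp s - ζm s| ≤ |ζp s| + |ζm s| := abs_sub _ _
        _ = ζp s + ζm s := by
            rw [abs_of_nonneg (hζp s hs), abs_of_nonneg (hζm s hs)]
    have := neg_abs_le ((-(ζp s - ζm s)) * Δy s)
    nlinarith
  rw [hdecomp] at hQ
  linarith
end

section
/- Fix positive integers T, n_a, n_b, reals ε_u ≥ 0, ε_y ≥ 0, and data sequences ŷ (indexed over {−n_a+1,…,T}) and û (indexed over {−n_b+1,…,T−1}). For (a,b) ∈ ℝ^{n_a} × ℝ^{n_b} define h_t(a,b) = ŷ_t + Σ_{i=1}^{n_a} a_i ŷ_{t−i} − Σ_{i=1}^{n_b} b_i û_{t−i}, and let P = { (a,b) : there exists a noise pair (Δu, Δy) with |Δu_s| ≤ ε_u, |Δy_s| ≤ ε_y for all s, and h_t(a,b) − Σ_{i=1}^{n_a} a_i Δy_{t−i} + Σ_{i=1}^{n_b} b_i Δu_{t−i} − Δy_t = 0 for all t ∈ {1,…,T} } be the projected consistency set. Let q : ℝ^{n_a} × ℝ^{n_b} → ℝ be any function. Suppose there exist multiplier functions ψ⁺, ψ⁻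 : ℝ^{n_a}×ℝ^{n_b} → ℝ^{\{−n_b+1,…,T−1\}}, ζ⁺, ζ⁻ : ℝ^{n_a}×ℝ^{n_b} → ℝ^{\{−n_a+1,…,T\}}, and μ : ℝ^{n_a}×ℝ^{n_b} → ℝ^{T} (extended by zero outside {1,…,T}) such that for every (a,b) ∈ P: all values of ψ⁺, ψ⁻, ζ⁺, ζ⁻ at (a,b) are nonnegative; ψ⁺_s(a,b) − ψ⁻_s(a,b) = Σ_{i=1}^{n_b} b_i μ_{s+i}(a,b) for all s; ζ⁺_s(a,b) − ζ⁻_s(a,b) = −( μ_s(a,b) + Σ_{i=1}^{n_a} a_i μ_{s+i}(a,b) ) for all s; and Q(a,b) := −q(a,b) + Σ_{t=1}^T h_t(a,b) μ_t(a,b) + ε_u Σ_s (ψ⁺_s(a,b) + ψ⁻_s(a,b)) + ε_y Σ_s (ζ⁺_s(a,b) + ζ⁻_s(a,b)) < 0. Then q(a,b) > 0 for every (a,b) ∈ P. (Functional form of Theorem 3: the Alternatives feasibility program certifies positivity of q over the consistency set.) -/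
lemma my_shift_sum (T L U i : ℤ) (μ d : ℤ → ℝ)
    (hμ : ∀ t, t ∉ Finset.Icc (1:ℤ) T → μ t = 0)
    (hL : L + i ≤ 1) (hU : T ≤ U + i) :
    ∑ s ∈ Finset.Icc L U, d s * μ (s + i)
      = ∑ t ∈ Finset.Icc (1:ℤ) T, d (t - i) * μ t := by
  have h1 : ∑ s ∈ Finset.Icc L U, d s * μ (s + i)
      = ∑ t ∈ Finset.Icc (L+i) (U+i), d (t - i) * μ t := by
    rw [← Finset.map_add_right_Icc, Finset.sum_map]
    simp [addRightEmbedding]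
  rw [h1]
  symm
  apply Finset.sum_subset
  · intro t ht
    simp only [Finset.mem_Icc] at *
    omega
  · intro t _ hnt
    rw [hμ t hnt]; ring

lemma my_swap_sum {n : ℕ} (It Is : Finset ℤ) (c : Fin n → ℝ) (d μ : ℤ → ℝ)
    (e : Fin n → ℤ)
    (hshift : ∀ i : Fin n,
      ∑ t ∈ It, d (t - e i) * μ t = ∑ s ∈ Is, d s * μ (s + e i)) :
    ∑ t ∈ It, (∑ i : Fin n, c i * d (t - e i)) * μ t
      = ∑ s ∈ Is, d s * (∑ i : Fin n, c i * μ (s + e i)) := by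
  calc ∑ t ∈ It, (∑ i : Fin n, c i * d (t - e i)) * μ t
      = ∑ i : Fin n, c i * ∑ t ∈ It, d (t - e i) * μ t := by
        simp_rw [Finset.sum_mul, mul_assoc]
        rw [Finset.sum_comm]
        simp_rw [← Finset.mul_sum]
    _ = ∑ i : Fin n, c i * ∑ s ∈ Is, d s * μ (s + e i) := by
        simp_rw [hshift]
    _ = ∑ s ∈ Is, d s * (∑ i : Fin n, c i * μ (s + e i)) := by
        simp_rw [Finset.mul_sum]
        rw [Finset.sum_comm]
        apply Finset.sum_congr rfl
        intro s _
        apply Finset.sum_congr rfl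
        intro i _
        ring

/-- Functional form of Theorem 3.  With data `(û, ŷ)`, residual
`h_t(a,b) = ŷ_t + ∑ a_i ŷ_{t-i} - ∑ b_i û_{t-i}` and projected consistency set
`P`, if multiplier functions `(ψ⁺, ψ⁻, ζ⁺, ζ⁻, μ)` exist that are nonnegative
(resp. zero-extended) and satisfy the matching conditions and `Q(a,b) < 0` at
every `(a,b) ∈ P`, then `q(a,b) > 0` on all of `P`.  Vectors `a ∈ ℝ^{n_a}`,
`b ∈ ℝ^{n_b}` are indexed so that `a i` stands for `a_{i+1}`. -/
theorem alternatives_certifies_positivity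
    (T na nb : ℕ) (hT : 0 < T) (hna : 0 < na) (hnb : 0 < nb)
    (εu εy : ℝ) (hεu : 0 ≤ εu) (hεy : 0 ≤ εy)
    (yhat uhat : ℤ → ℝ)
    (h : (Fin na → ℝ) × (Fin nb → ℝ) → ℤ → ℝ)
    (hh : ∀ (ab : (Fin na → ℝ) × (Fin nb → ℝ)) (t : ℤ),
      h ab t = yhat t + (∑ i : Fin na, ab.1 i * yhat (t - (i.val + 1 : ℤ)))
               - ∑ i : Fin nb, ab.2 i * uhat (t - (i.val + 1 : ℤ)))
    (P : Set ((Fin na → ℝ) × (Fin nb → ℝ)))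
    (hP : P = {ab | ∃ Δu Δy : ℤ → ℝ,
      (∀ s ∈ Finset.Icc (-(nb : ℤ) + 1) ((T : ℤ) - 1), |Δu s| ≤ εu) ∧
      (∀ s ∈ Finset.Icc (-(na : ℤ) + 1) (T : ℤ), |Δy s| ≤ εy) ∧
      (∀ t ∈ Finset.Icc (1 : ℤ) (T : ℤ),
        h ab t - (∑ i : Fin na, ab.1 i * Δy (t - (i.val + 1 : ℤ)))
            + (∑ i : Fin nb, ab.2 i * Δu (t - (i.val + 1 : ℤ))) - Δy t = 0)})
    (q : (Fin na → ℝ) × (Fin nb → ℝ) → ℝ)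
    (ψp ψm ζp ζm μ : (Fin na → ℝ) × (Fin nb → ℝ) → ℤ → ℝ)
    (hψp : ∀ ab ∈ P, ∀ s ∈ Finset.Icc (-(nb : ℤ) + 1) ((T : ℤ) - 1), 0 ≤ ψp ab s)
    (hψm : ∀ ab ∈ P, ∀ s ∈ Finset.Icc (-(nb : ℤ) + 1) ((T : ℤ) - 1), 0 ≤ ψm ab s)
    (hζp : ∀ ab ∈ P, ∀ s ∈ Finset.Icc (-(na : ℤ) + 1) (T : ℤ), 0 ≤ ζp ab s)
    (hζm : ∀ ab ∈ P, ∀ s ∈ Finset.Icc (-(na : ℤ) + 1) (T : ℤ), 0 ≤ ζm ab s)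
    (hμ0 : ∀ ab ∈ P, ∀ t : ℤ, t ∉ Finset.Icc (1 : ℤ) (T : ℤ) → μ ab t = 0)
    (hmatchu : ∀ ab ∈ P, ∀ s ∈ Finset.Icc (-(nb : ℤ) + 1) ((T : ℤ) - 1),
      ψp ab s - ψm ab s = ∑ i : Fin nb, ab.2 i * μ ab (s + (i.val + 1 : ℤ)))
    (hmatchy : ∀ ab ∈ P, ∀ s ∈ Finset.Icc (-(na : ℤ) + 1) (T : ℤ),
      ζp ab s - ζm ab s
        = -(μ ab s + ∑ i : Fin na, ab.1 i * μ ab (s + (i.val + 1 : ℤ))))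
    (hQ : ∀ ab ∈ P,
      -q ab + (∑ t ∈ Finset.Icc (1 : ℤ) (T : ℤ), h ab t * μ ab t)
        + εu * (∑ s ∈ Finset.Icc (-(nb : ℤ) + 1) ((T : ℤ) - 1), (ψp ab s + ψm ab s))
        + εy * (∑ s ∈ Finset.Icc (-(na : ℤ) + 1) (T : ℤ), (ζp ab s + ζm ab s)) < 0) :
    ∀ ab ∈ P, 0 < q ab := by
  intro ab hab
  have hQab := hQ ab hab
  have hab' := hab
  rw [hP] at hab'
  obtain ⟨Δu, Δy, hΔu, hΔy, hcons⟩ := hab'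
  have hμz : ∀ t, t ∉ Finset.Icc (1:ℤ) (T:ℤ) → μ ab t = 0 := hμ0 ab hab
  have hexp : ∀ t ∈ Finset.Icc (1:ℤ) (T:ℤ),
      h ab t = Δy t + (∑ i : Fin na, ab.1 i * Δy (t - (i.val + 1 : ℤ)))
          - ∑ i : Fin nb, ab.2 i * Δu (t - (i.val + 1 : ℤ)) := by
    intro t ht
    have := hcons t ht
    linarith
  -- term A: direct Δy term
  have hA : ∑ t ∈ Finset.Icc (1:ℤ) (T:ℤ), Δy t * μ ab t
      = ∑ s ∈ Finset.Icc (-(na:ℤ)+1) (T:ℤ), Δy s * μ ab s := by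
    apply Finset.sum_subset
    · intro t ht
      simp only [Finset.mem_Icc] at *
      omega
    · intro t _ hnt
      rw [hμz t hnt]; ring
  -- shifted Δy terms
  have hB : ∑ t ∈ Finset.Icc (1:ℤ) (T:ℤ),
        (∑ i : Fin na, ab.1 i * Δy (t - (i.val + 1 : ℤ))) * μ ab t
      = ∑ s ∈ Finset.Icc (-(na:ℤ)+1) (T:ℤ),
        Δy s * (∑ i : Fin na, ab.1 i * μ ab (s + (i.val + 1 : ℤ))) := by
    apply my_swap_sum
    intro i
    symm
    apply my_shift_sum _ _ _ _ _ _ hμz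
    · have : (i.val : ℤ) + 1 ≤ (na : ℤ) := by exact_mod_cast i.isLt
      omega
    · omega
  -- shifted Δu terms
  have hC : ∑ t ∈ Finset.Icc (1:ℤ) (T:ℤ),
        (∑ i : Fin nb, ab.2 i * Δu (t - (i.val + 1 : ℤ))) * μ ab t
      = ∑ s ∈ Finset.Icc (-(nb:ℤ)+1) ((T:ℤ)-1),
        Δu s * (∑ i : Fin nb, ab.2 i * μ ab (s + (i.val + 1 : ℤ))) := by
    apply my_swap_sum
    intro i
    symm
    apply my_shift_sum _ _ _ _ _ _ hμz
    · have : (i.val : ℤ) + 1 ≤ (nb : ℤ) := by exact_mod_cast i.isLt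
      omega
    · have : (0:ℤ) ≤ (i.val : ℤ) := Int.ofNat_nonneg _
      omega
  -- main sum identity
  have key : ∑ t ∈ Finset.Icc (1:ℤ) (T:ℤ), h ab t * μ ab t
      = (∑ s ∈ Finset.Icc (-(na:ℤ)+1) (T:ℤ), Δy s * (-(ζp ab s - ζm ab s)))
        - ∑ s ∈ Finset.Icc (-(nb:ℤ)+1) ((T:ℤ)-1), Δu s * (ψp ab s - ψm ab s) := by
    have e1 : ∑ t ∈ Finset.Icc (1:ℤ) (T:ℤ), h ab t * μ ab t
        = (∑ t ∈ Finset.Icc (1:ℤ) (T:ℤ), Δy t * μ ab t)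
          + (∑ t ∈ Finset.Icc (1:ℤ) (T:ℤ),
              (∑ i : Fin na, ab.1 i * Δy (t - (i.val + 1 : ℤ))) * μ ab t)
          - ∑ t ∈ Finset.Icc (1:ℤ) (T:ℤ),
              (∑ i : Fin nb, ab.2 i * Δu (t - (i.val + 1 : ℤ))) * μ ab t := by
      rw [← Finset.sum_add_distrib, ← Finset.sum_sub_distrib]
      apply Finset.sum_congr rfl
      intro t ht
      rw [hexp t ht]
      ring
    rw [e1, hA, hB, hC, ← Finset.sum_add_distrib]
    congr 1
    · apply Finset.sum_congr rfl
      intro s hs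
      rw [hmatchy ab hab s hs]
      ring
    · apply Finset.sum_congr rfl
      intro s hs
      rw [hmatchu ab hab s hs]
  -- lower bounds on the two sums
  have hy : ∀ s ∈ Finset.Icc (-(na:ℤ)+1) (T:ℤ),
      -(εy * (ζp ab s + ζm ab s)) ≤ Δy s * (-(ζp ab s - ζm ab s)) := by
    intro s hs
    have h1 := abs_le.mp (hΔy s hs)
    have h2 := hζp ab hab s hs
    have h3 := hζm ab hab s hs
    nlinarith [mul_nonneg h2 (by linarith : (0:ℝ) ≤ εy - Δy s),
      mul_nonneg h3 (by linarith : (0:ℝ) ≤ εy + Δy s)]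
  have hu : ∀ s ∈ Finset.Icc (-(nb:ℤ)+1) ((T:ℤ)-1),
      -(εu * (ψp ab s + ψm ab s)) ≤ -(Δu s * (ψp ab s - ψm ab s)) := by
    intro s hs
    have h1 := abs_le.mp (hΔu s hs)
    have h2 := hψp ab hab s hs
    have h3 := hψm ab hab s hs
    nlinarith [mul_nonneg h2 (by linarith : (0:ℝ) ≤ εu + Δu s),
      mul_nonneg h3 (by linarith : (0:ℝ) ≤ εu - Δu s)]
  have hysum := Finset.sum_le_sum hy
  have husum := Finset.sum_le_sum hu
  simp only [Finset.sum_neg_distrib, ← Finset.mul_sum] at hysum husum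
  linarith [key, hysum, husum, hQab]
end
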